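/- arXiv:1204.1739 — 9 statements merged into one kernel-verified Lean document; each statement's English description precedes it below -/
import Mathlib

section
/- Let X1, X2, X3, X4 be independent exponential random variables with unit mean, let α > 0, let d_sr, d_rd, d_se, d_re > 0 and p_s, p_r > 0. Then the probability P( min{ p_s·X1/d_sr^α , p_r·X2/d_rd^α } < p_s·X3/d_se^α + p_r·X4/d_re^α ) equals 1 − d_se^α·d_re^α / [ (d_rd^α + d_re^α)(d_sr^α + d_se^α) + d_sr^α·d_rd^α + (p_r/p_s)·d_sr^α·(d_sr^α + d_se^α) + (p_s/p_r)·d_rd^α·(d_rd^α + d_re^α) ]. -/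
open MeasureTheory ProbabilityTheory Real Set

lemma expMeasure_one_def : expMeasure 1 = volume.withDensity (exponentialPDF 1) := rfl

lemma measurable_exponentialPDF (r : ℝ) : Measurable (exponentialPDF r) :=
  (measurable_exponentialPDFReal r).ennreal_ofReal

lemma expMeasure_Ici {t : ℝ} (ht : 0 ≤ t) :
    expMeasure 1 (Ici t) = ENNReal.ofReal (rexp (-t)) := by
  rw [expMeasure_one_def, withDensity_apply _ measurableSet_Ici]
  have h1 : ∀ x ∈ Ici t, exponentialPDF 1 x = ENNReal.ofReal (rexp (-x)) := by
    intro x hx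
    rw [exponentialPDF_of_nonneg (le_trans ht hx)]
    norm_num
  rw [setLIntegral_congr_fun measurableSet_Ici h1,
    ← ofReal_integral_eq_lintegral_ofReal]
  · rw [integral_Ici_eq_integral_Ioi, integral_exp_neg_Ioi]
  · exact (integrableOn_Ici_iff_integrableOn_Ioi).2
      (by simpa using exp_neg_integrableOn_Ioi t one_pos)
  · filter_upwards with x using (exp_pos _).le

lemma expMeasure_Iio_zero : expMeasure 1 (Iio 0) = 0 := by
  rw [expMeasure_one_def, withDensity_apply _ measurableSet_Iio,
    setLIntegral_congr_fun measurableSet_Iio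
      (fun x (hx : x < 0) => exponentialPDF_of_neg hx),
    lintegral_zero]

lemma expMeasure_mgf {s : ℝ} (hs : 0 ≤ s) :
    ∫⁻ x, ENNReal.ofReal (rexp (-(s * x))) ∂(expMeasure 1)
      = ENNReal.ofReal (1 / (1 + s)) := by
  have h1s : (0:ℝ) < 1 + s := by linarith
  rw [expMeasure_one_def,
    lintegral_withDensity_eq_lintegral_mul _ (measurable_exponentialPDF 1)
      (by fun_prop)]
  have hpt : ∀ x, (exponentialPDF 1 * fun x => ENNReal.ofReal (rexp (-(s * x)))) x
      = ENNReal.ofReal (1 / (1 + s)) * exponentialPDF (1 + s) x := by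
    intro x
    simp only [Pi.mul_apply]
    rcases le_or_gt 0 x with hx | hx
    · rw [exponentialPDF_of_nonneg hx, exponentialPDF_of_nonneg hx,
        ← ENNReal.ofReal_mul (by positivity), ← ENNReal.ofReal_mul (by positivity)]
      congr 1
      rw [show (-(1 * x)) = -x by ring, show (-((1+s) * x)) = -x + -(s*x) by ring,
        exp_add]
      field_simp
    · rw [exponentialPDF_of_neg hx, exponentialPDF_of_neg hx, zero_mul, mul_zero]
  rw [lintegral_congr hpt,
    lintegral_const_mul _ (measurable_exponentialPDF (1 + s)),
    lintegral_exponentialPDF_eq_one h1s, mul_one]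

lemma df_aux
    {Ω : Type*} [MeasureSpace Ω] [IsProbabilityMeasure (ℙ : Measure Ω)]
    (X : Fin 4 → Ω → ℝ)
    (hmeas : ∀ i, Measurable (X i))
    (hindep : iIndepFun X ℙ)
    (hexp : ∀ i, Measure.map (X i) ℙ = expMeasure 1)
    (a b c d : ℝ) (ha : 0 < a) (hb : 0 < b) (hc : 0 < c) (hd : 0 < d) :
    ℙ {ω | min (a * X 0 ω) (b * X 1 ω) < c * X 2 ω + d * X 3 ω}
      = 1 - ENNReal.ofReal (1 / ((1 + (1/a + 1/b) * c) * (1 + (1/a + 1/b) * d))) := by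
  set μ := expMeasure 1 with hμ
  haveI : IsProbabilityMeasure μ := isProbabilityMeasure_expMeasure one_pos
  set l : ℝ := 1/a + 1/b with hl
  have hl0 : 0 < l := by positivity
  -- the target set and its complement
  set S : Set Ω := {ω | min (a * X 0 ω) (b * X 1 ω) < c * X 2 ω + d * X 3 ω} with hS
  have hSmeas : MeasurableSet S := by
    apply measurableSet_lt <;> fun_prop
  set T : Set ((ℝ × ℝ) × ℝ × ℝ) :=
    {p | c * p.1.1 + d * p.1.2 ≤ a * p.2.1 ∧ c * p.1.1 + d * p.1.2 ≤ b * p.2.2} with hT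
  have hTmeas : MeasurableSet T := by
    rw [hT, Set.setOf_and]
    exact (measurableSet_le (by fun_prop) (by fun_prop)).inter
      (measurableSet_le (by fun_prop) (by fun_prop))
  have hScompl : Sᶜ = (fun ω => ((X 2 ω, X 3 ω), (X 0 ω, X 1 ω))) ⁻¹' T := by
    ext ω
    simp [hS, hT, not_lt, le_min_iff]
  -- independence: law of the quadruple
  have hpairmeas2 : Measurable fun ω => (X 2 ω, X 3 ω) := by fun_prop
  have hpairmeas0 : Measurable fun ω => (X 0 ω, X 1 ω) := by fun_prop
  have hVW : IndepFun (fun ω => (X 2 ω, X 3 ω)) (fun ω => (X 0 ω, X 1 ω)) ℙ :=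
    hindep.indepFun_prodMk_prodMk hmeas 2 3 0 1 (by decide) (by decide) (by decide) (by decide)
  have hmapW : Measure.map (fun ω => (X 2 ω, X 3 ω)) ℙ = μ.prod μ := by
    rw [(indepFun_iff_map_prod_eq_prod_map_map (hmeas 2).aemeasurable
      (hmeas 3).aemeasurable).mp (hindep.indepFun (show (2 : Fin 4) ≠ 3 by decide)),
      hexp 2, hexp 3]
  have hmapV : Measure.map (fun ω => (X 0 ω, X 1 ω)) ℙ = μ.prod μ := by
    rw [(indepFun_iff_map_prod_eq_prod_map_map (hmeas 0).aemeasurable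
      (hmeas 1).aemeasurable).mp (hindep.indepFun (show (0 : Fin 4) ≠ 1 by decide)),
      hexp 0, hexp 1]
  have hmap : Measure.map (fun ω => ((X 2 ω, X 3 ω), (X 0 ω, X 1 ω))) ℙ = (μ.prod μ).prod (μ.prod μ) := by
    rw [(indepFun_iff_map_prod_eq_prod_map_map hpairmeas2.aemeasurable
      hpairmeas0.aemeasurable).mp hVW, hmapW, hmapV]
  -- probability of the complement
  have hcompl : ℙ Sᶜ = ((μ.prod μ).prod (μ.prod μ)) T := by
    rw [hScompl, ← Measure.map_apply (hpairmeas2.prodMk hpairmeas0) hTmeas, hmap]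
  -- compute it
  have hae : ∀ᵐ (w : ℝ × ℝ) ∂(μ.prod μ), 0 ≤ w.1 ∧ 0 ≤ w.2 := by
    have h1 : (μ.prod μ) {w : ℝ × ℝ | w.1 < 0} = 0 := by
      have : {w : ℝ × ℝ | w.1 < 0} = (Iio 0) ×ˢ (univ : Set ℝ) := by
        ext w; simp
      rw [this, Measure.prod_prod, expMeasure_Iio_zero, zero_mul]
    have h2 : (μ.prod μ) {w : ℝ × ℝ | w.2 < 0} = 0 := by
      have : {w : ℝ × ℝ | w.2 < 0} = (univ : Set ℝ) ×ˢ (Iio 0) := by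
        ext w; simp
      rw [this, Measure.prod_prod, expMeasure_Iio_zero, mul_zero]
    rw [ae_iff]
    refine measure_mono_null (fun w hw => ?_) (measure_union_null h1 h2)
    simp only [mem_setOf_eq, not_and, not_le] at hw
    rcases lt_or_ge w.1 0 with h | h
    · exact Or.inl h
    · exact Or.inr (hw h)
  have hinner : ∀ w : ℝ × ℝ, 0 ≤ w.1 → 0 ≤ w.2 →
      (μ.prod μ) (Prod.mk w ⁻¹' T) = ENNReal.ofReal (rexp (-(l * (c * w.1 + d * w.2)))) := by
    intro w hw1 hw2
    have ht : 0 ≤ c * w.1 + d * w.2 := by positivity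
    have hpre : Prod.mk w ⁻¹' T
        = (Ici ((c * w.1 + d * w.2) / a)) ×ˢ (Ici ((c * w.1 + d * w.2) / b)) := by
      ext v
      simp only [hT, mem_preimage, mem_setOf_eq, mem_prod, mem_Ici]
      rw [div_le_iff₀ ha, div_le_iff₀ hb, mul_comm v.1 a, mul_comm v.2 b]
    rw [hpre, Measure.prod_prod, expMeasure_Ici (by positivity), expMeasure_Ici (by positivity),
      ← ENNReal.ofReal_mul (exp_pos _).le, ← exp_add,
      show -((c * w.1 + d * w.2) / a) + -((c * w.1 + d * w.2) / b)
        = -(l * (c * w.1 + d * w.2)) by simp only [hl]; ring]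
  calc ℙ S = 1 - ℙ Sᶜ := by
        rw [← prob_compl_eq_one_sub hSmeas.compl, compl_compl]
    _ = 1 - ENNReal.ofReal (1 / ((1 + l * c) * (1 + l * d))) := by
        congr 1
        rw [hcompl, Measure.prod_apply hTmeas]
        have hcongr : ∫⁻ w, (μ.prod μ) (Prod.mk w ⁻¹' T) ∂(μ.prod μ)
            = ∫⁻ w : ℝ × ℝ, ENNReal.ofReal (rexp (-(l * c * w.1))) *
                ENNReal.ofReal (rexp (-(l * d * w.2))) ∂(μ.prod μ) := by
          refine lintegral_congr_ae ?_
          filter_upwards [hae] with w hw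
          rw [hinner w hw.1 hw.2, ← ENNReal.ofReal_mul (exp_pos _).le, ← exp_add]
          congr 2
          ring
        rw [hcongr, lintegral_prod _ (by fun_prop)]
        simp only []
        have hfac : ∀ x : ℝ, ∫⁻ y, ENNReal.ofReal (rexp (-(l * c * x))) *
            ENNReal.ofReal (rexp (-(l * d * y))) ∂μ
            = ENNReal.ofReal (rexp (-(l * c * x))) * ENNReal.ofReal (1 / (1 + l * d)) := by
          intro x
          rw [lintegral_const_mul _ (by fun_prop), expMeasure_mgf (by positivity)]
        simp only [hfac]
        rw [lintegral_mul_const _ (by fun_prop), expMeasure_mgf (by positivity),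
          ← ENNReal.ofReal_mul (by positivity)]
        congr 1
        rw [div_mul_div_comm, one_mul]

/-- DF secrecy outage probability in the four-node relay system (Eq. (6) of the paper). -/
theorem df_outage_probability
    {Ω : Type*} [MeasureSpace Ω] [IsProbabilityMeasure (ℙ : Measure Ω)]
    (X : Fin 4 → Ω → ℝ)
    (hmeas : ∀ i, Measurable (X i))
    (hindep : iIndepFun X ℙ)
    (hexp : ∀ i, Measure.map (X i) ℙ = expMeasure 1)
    (α dsr drd dse dre ps pr : ℝ)
    (hα : 0 < α) (hsr : 0 < dsr) (hrd : 0 < drd) (hse : 0 < dse) (hre : 0 < dre)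
    (hps : 0 < ps) (hpr : 0 < pr) :
    ℙ {ω | min (ps * X 0 ω / dsr ^ α) (pr * X 1 ω / drd ^ α)
        < ps * X 2 ω / dse ^ α + pr * X 3 ω / dre ^ α}
      = ENNReal.ofReal (1 - dse ^ α * dre ^ α /
          ((drd ^ α + dre ^ α) * (dsr ^ α + dse ^ α) + dsr ^ α * drd ^ α
            + (pr / ps) * dsr ^ α * (dsr ^ α + dse ^ α)
            + (ps / pr) * drd ^ α * (drd ^ α + dre ^ α))) := by
  have hA : 0 < dsr ^ α := rpow_pos_of_pos hsr α
  have hB : 0 < drd ^ α := rpow_pos_of_pos hrd α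
  have hC : 0 < dse ^ α := rpow_pos_of_pos hse α
  have hD : 0 < dre ^ α := rpow_pos_of_pos hre α
  have hset : {ω | min (ps * X 0 ω / dsr ^ α) (pr * X 1 ω / drd ^ α)
        < ps * X 2 ω / dse ^ α + pr * X 3 ω / dre ^ α}
      = {ω | min ((ps / dsr ^ α) * X 0 ω) ((pr / drd ^ α) * X 1 ω)
        < (ps / dse ^ α) * X 2 ω + (pr / dre ^ α) * X 3 ω} := by
    ext ω
    simp only [mem_setOf_eq, mul_div_right_comm]
  rw [hset, df_aux X hmeas hindep hexp _ _ _ _ (by positivity) (by positivity)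
    (by positivity) (by positivity)]
  set A := dsr ^ α
  set B := drd ^ α
  set C := dse ^ α
  set D := dre ^ α
  set E : ℝ := (B + D) * (A + C) + A * B + (pr / ps) * A * (A + C) + (ps / pr) * B * (B + D)
    with hE
  have hEpos : 0 < E := by positivity
  have hP : (0:ℝ) < 1 + (1 / (ps / A) + 1 / (pr / B)) * (ps / C) := by positivity
  have hQ : (0:ℝ) < 1 + (1 / (ps / A) + 1 / (pr / B)) * (pr / D) := by positivity
  have hr2 : 1 / ((1 + (1 / (ps / A) + 1 / (pr / B)) * (ps / C))
        * (1 + (1 / (ps / A) + 1 / (pr / B)) * (pr / D))) = C * D / E := by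
    rw [div_eq_div_iff (by positivity) hEpos.ne', hE]
    field_simp
    ring
  rw [hr2, ENNReal.ofReal_sub _ (by positivity), ENNReal.ofReal_one]
end

section
/- Fix α > 0 and d_sr, d_rd, d_se, d_re > 0, and define for p_s, p_r > 0 the function F(p_s, p_r) = 1 − d_se^α·d_re^α / [ (d_rd^α + d_re^α)(d_sr^α + d_se^α) + d_sr^α·d_rd^α + (p_r/p_s)·d_sr^α·(d_sr^α + d_se^α) + (p_s/p_r)·d_rd^α·(d_rd^α + d_re^α) ]. Then for all p_s, p_r > 0, F(p_s, p_r) ≥ 1 − d_se^α·d_re^α / ( √((d_sr^α + d_se^α)(d_rd^α + d_re^α)) + √(d_sr^α·d_rd^α) )², with equality if and only if p_r/p_s = √( d_rd^α·(d_rd^α + d_re^α) / ( d_sr^α·(d_sr^α + d_se^α) ) ). In particular, F depends on p_s and p_r only through the ratio p_r/p_s. -/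
open Real

private lemma aux_amgm {A B t : ℝ} (hA : 0 < A) (hB : 0 < B) (ht : 0 < t) :
    2 * Real.sqrt (A * B) ≤ t * A + B / t ∧
    (t * A + B / t = 2 * Real.sqrt (A * B) ↔ t = Real.sqrt (B / A)) := by
  set u := Real.sqrt (t * A) with hu
  set v := Real.sqrt (B / t) with hv
  have hu0 : 0 ≤ u := Real.sqrt_nonneg _
  have hv0 : 0 ≤ v := Real.sqrt_nonneg _
  have hu2 : u ^ 2 = t * A := Real.sq_sqrt (by positivity)
  have hv2 : v ^ 2 = B / t := Real.sq_sqrt (by positivity)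
  have huv : u * v = Real.sqrt (A * B) := by
    rw [hu, hv, ← Real.sqrt_mul (by positivity)]
    congr 1
    field_simp
  have hsum : t * A + B / t = u ^ 2 + v ^ 2 := by rw [hu2, hv2]
  have hineq : 2 * (u * v) ≤ u ^ 2 + v ^ 2 := by nlinarith [sq_nonneg (u - v)]
  constructor
  · rw [hsum, ← huv]; linarith
  · rw [hsum, ← huv]
    constructor
    · intro h
      have huveq : u = v := by nlinarith [sq_nonneg (u - v)]
      have htA : t * A = B / t := by rw [← hu2, ← hv2, huveq]
      have ht2 : t ^ 2 = B / A := by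
        field_simp at htA ⊢
        nlinarith
      rw [← ht2, Real.sqrt_sq ht.le]
    · intro h
      have ht2 : t ^ 2 = B / A := by
        rw [h, Real.sq_sqrt (by positivity)]
      have htA : t * A = B / t := by
        field_simp at ht2 ⊢
        nlinarith
      have huveq : u = v := by
        rw [hu, hv, htA]
      rw [huveq]; ring

/-- Optimal power allocation for the DF strategy (Proposition 1 of the paper):
the DF outage probability `F ps pr` is minimized exactly when
`pr / ps = √(drd^α (drd^α + dre^α) / (dsr^α (dsr^α + dse^α)))`, with minimal value
`1 - dse^α dre^α / (√((dsr^α + dse^α)(drd^α + dre^α)) + √(dsr^α drd^α))²`; moreover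
`F` depends on the powers only through the ratio `pr / ps`. -/
theorem df_optimal_power_allocation
    (α dsr drd dse dre : ℝ)
    (hα : 0 < α) (hsr : 0 < dsr) (hrd : 0 < drd) (hse : 0 < dse) (hre : 0 < dre)
    (F : ℝ → ℝ → ℝ)
    (hF : ∀ ps pr : ℝ, F ps pr = 1 - dse ^ α * dre ^ α /
        ((drd ^ α + dre ^ α) * (dsr ^ α + dse ^ α) + dsr ^ α * drd ^ α
          + (pr / ps) * dsr ^ α * (dsr ^ α + dse ^ α)
          + (ps / pr) * drd ^ α * (drd ^ α + dre ^ α))) :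
    (∀ ps pr : ℝ, 0 < ps → 0 < pr →
        F ps pr ≥ 1 - dse ^ α * dre ^ α /
          (Real.sqrt ((dsr ^ α + dse ^ α) * (drd ^ α + dre ^ α))
            + Real.sqrt (dsr ^ α * drd ^ α)) ^ 2)
    ∧ (∀ ps pr : ℝ, 0 < ps → 0 < pr →
        (F ps pr = 1 - dse ^ α * dre ^ α /
            (Real.sqrt ((dsr ^ α + dse ^ α) * (drd ^ α + dre ^ α))
              + Real.sqrt (dsr ^ α * drd ^ α)) ^ 2
          ↔ pr / ps = Real.sqrt (drd ^ α * (drd ^ α + dre ^ α)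
              / (dsr ^ α * (dsr ^ α + dse ^ α)))))
    ∧ (∀ ps pr ps' pr' : ℝ, 0 < ps → 0 < pr → 0 < ps' → 0 < pr' →
        pr / ps = pr' / ps' → F ps pr = F ps' pr') := by
  set a := dsr ^ α with ha'
  set b := drd ^ α with hb'
  set c := dse ^ α with hc'
  set e := dre ^ α with he'
  have ha : 0 < a := Real.rpow_pos_of_pos hsr α
  have hb : 0 < b := Real.rpow_pos_of_pos hrd α
  have hc : 0 < c := Real.rpow_pos_of_pos hse α
  have he : 0 < e := Real.rpow_pos_of_pos hre α
  set A := a * (a + c) with hA'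
  set B := b * (b + e) with hB'
  have hApos : 0 < A := by positivity
  have hBpos : 0 < B := by positivity
  set S := Real.sqrt ((a + c) * (b + e)) + Real.sqrt (a * b) with hS'
  have hSpos : 0 < S := by
    have : 0 < Real.sqrt (a * b) := Real.sqrt_pos.mpr (by positivity)
    have h2 : 0 ≤ Real.sqrt ((a + c) * (b + e)) := Real.sqrt_nonneg _
    linarith
  have hS2 : S ^ 2 = (b + e) * (a + c) + a * b + 2 * Real.sqrt (A * B) := by
    have h1 : Real.sqrt ((a + c) * (b + e)) ^ 2 = (a + c) * (b + e) :=
      Real.sq_sqrt (by positivity)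
    have h2 : Real.sqrt (a * b) ^ 2 = a * b := Real.sq_sqrt (by positivity)
    have h3 : Real.sqrt ((a + c) * (b + e)) * Real.sqrt (a * b) = Real.sqrt (A * B) := by
      rw [← Real.sqrt_mul (by positivity)]
      congr 1
      ring
    rw [hS', add_sq, h1, h2, mul_assoc 2, h3]
    ring
  have hS2pos : 0 < S ^ 2 := by positivity
  -- Denominator as a function of the ratio t
  have hDen : ∀ ps pr : ℝ, 0 < ps → 0 < pr →
      (b + e) * (a + c) + a * b + (pr / ps) * a * (a + c) + (ps / pr) * b * (b + e)
        = (b + e) * (a + c) + a * b + (pr / ps) * A + B / (pr / ps) := by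
    intro ps pr hps hpr
    rw [hA', hB']
    field_simp
  have key : ∀ t : ℝ, 0 < t →
      S ^ 2 ≤ (b + e) * (a + c) + a * b + t * A + B / t ∧
      ((b + e) * (a + c) + a * b + t * A + B / t = S ^ 2 ↔ t = Real.sqrt (B / A)) := by
    intro t ht
    obtain ⟨h1, h2⟩ := aux_amgm hApos hBpos ht
    constructor
    · rw [hS2]; linarith
    · rw [hS2]
      constructor
      · intro h; exact h2.mp (by linarith)
      · intro h; have := h2.mpr h; linarith
  refine ⟨?_, ?_, ?_⟩
  · intro ps pr hps hpr
    rw [hF ps pr, hDen ps pr hps hpr]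
    set t := pr / ps with ht'
    have ht : 0 < t := by positivity
    obtain ⟨h1, _⟩ := key t ht
    have hDpos : 0 < (b + e) * (a + c) + a * b + t * A + B / t := lt_of_lt_of_le hS2pos h1
    have : c * e / ((b + e) * (a + c) + a * b + t * A + B / t) ≤ c * e / S ^ 2 :=
      div_le_div_of_nonneg_left (by positivity) hS2pos h1
    linarith
  · intro ps pr hps hpr
    rw [hF ps pr, hDen ps pr hps hpr]
    set t := pr / ps with ht'
    have ht : 0 < t := by positivity
    obtain ⟨h1, h2⟩ := key t ht
    have hDpos : 0 < (b + e) * (a + c) + a * b + t * A + B / t := lt_of_lt_of_le hS2pos h1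
    constructor
    · intro h
      have hdiv : c * e / ((b + e) * (a + c) + a * b + t * A + B / t) = c * e / S ^ 2 := by
        linarith
      have hce : (0:ℝ) < c * e := by positivity
      rw [div_eq_div_iff hDpos.ne' hS2pos.ne'] at hdiv
      have hDeq : (b + e) * (a + c) + a * b + t * A + B / t = S ^ 2 := by
        apply mul_left_cancel₀ hce.ne'
        linarith [hdiv, mul_comm ((b + e) * (a + c) + a * b + t * A + B / t) (c * e)]
      exact h2.mp hDeq
    · intro h
      have hDeq := h2.mpr h
      rw [hDeq]
  · intro ps pr ps' pr' hps hpr hps' hpr' hratio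
    have hinv : ps / pr = ps' / pr' := by
      rw [← one_div_div pr ps, ← one_div_div pr' ps', hratio]
    rw [hF ps pr, hF ps' pr', hratio, hinv]
end

section
/- For any α > 0 and d_sr, d_rd, d_se, d_re > 0, with P_DF(d) = 1 − d_se^α·d_re^α / ( √((d_sr^α + d_se^α)(d_rd^α + d_re^α)) + √(d_sr^α·d_rd^α) )² and P_RF(d) = 1 − d_se^α·d_re^α / [ (d_sr^α + d_se^α)(d_rd^α + d_re^α) ], one has P_DF(d) > P_RF(d). -/
open Real

/-- Theorem 1 of the paper: the minimal DF secrecy outage probability is always strictly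
larger than the RF secrecy outage probability. -/
theorem df_outage_gt_rf_outage
    (α dsr drd dse dre : ℝ)
    (hα : 0 < α) (hsr : 0 < dsr) (hrd : 0 < drd) (hse : 0 < dse) (hre : 0 < dre)
    (PDF PRF : ℝ)
    (hPDF : PDF = 1 - dse ^ α * dre ^ α /
        (Real.sqrt ((dsr ^ α + dse ^ α) * (drd ^ α + dre ^ α))
          + Real.sqrt (dsr ^ α * drd ^ α)) ^ 2)
    (hPRF : PRF = 1 - dse ^ α * dre ^ α /
        ((dsr ^ α + dse ^ α) * (drd ^ α + dre ^ α))) :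
    PDF > PRF := by
  have hA : 0 < (dsr ^ α + dse ^ α) * (drd ^ α + dre ^ α) := by positivity
  have hB : 0 < dsr ^ α * drd ^ α := by positivity
  have hN : 0 < dse ^ α * dre ^ α := by positivity
  have hsq : (Real.sqrt ((dsr ^ α + dse ^ α) * (drd ^ α + dre ^ α))
      + Real.sqrt (dsr ^ α * drd ^ α)) ^ 2
      > (dsr ^ α + dse ^ α) * (drd ^ α + dre ^ α) := by
    have h1 := Real.sq_sqrt hA.le
    have h2 := Real.sq_sqrt hB.le
    have h3 : 0 ≤ Real.sqrt ((dsr ^ α + dse ^ α) * (drd ^ α + dre ^ α)) :=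
      Real.sqrt_nonneg _
    have h4 : 0 < Real.sqrt (dsr ^ α * drd ^ α) := Real.sqrt_pos.mpr hB
    nlinarith [mul_nonneg h3 h4.le]
  have hdiv : dse ^ α * dre ^ α /
        (Real.sqrt ((dsr ^ α + dse ^ α) * (drd ^ α + dre ^ α))
          + Real.sqrt (dsr ^ α * drd ^ α)) ^ 2
      < dse ^ α * dre ^ α / ((dsr ^ α + dse ^ α) * (drd ^ α + dre ^ α)) :=
    div_lt_div_of_pos_left hN hA hsq
  rw [hPDF, hPRF]
  linarith
end

section
/- For any α > 0, d_sr, d_rd, d_se, d_re > 0 and any transmit powers p_s, p_r > 0, the decode-and-forward outage probability 1 − d_se^α·d_re^α / [ (d_rd^α + d_re^α)(d_sr^α + d_se^α) + d_sr^α·d_rd^α + (p_r/p_s)·d_sr^α·(d_sr^α + d_se^α) + (p_s/p_r)·d_rd^α·(d_rd^α + d_re^α) ] is strictly larger than the randomize-and-forward outage probability 1 − d_se^α·d_re^α / [ (d_sr^α + d_se^α)(d_rd^α + d_re^α) ]. -/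
open Real

/-- For every power allocation, the DF secrecy outage probability is strictly larger
than the RF secrecy outage probability. -/
theorem df_outage_gt_rf_outage_any_power
    (α dsr drd dse dre ps pr : ℝ)
    (hα : 0 < α) (hsr : 0 < dsr) (hrd : 0 < drd) (hse : 0 < dse) (hre : 0 < dre)
    (hps : 0 < ps) (hpr : 0 < pr) :
    1 - dse ^ α * dre ^ α /
        ((drd ^ α + dre ^ α) * (dsr ^ α + dse ^ α) + dsr ^ α * drd ^ α
          + (pr / ps) * dsr ^ α * (dsr ^ α + dse ^ α)
          + (ps / pr) * drd ^ α * (drd ^ α + dre ^ α))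
      > 1 - dse ^ α * dre ^ α /
          ((dsr ^ α + dse ^ α) * (drd ^ α + dre ^ α)) := by
  have ha : 0 < dsr ^ α := Real.rpow_pos_of_pos hsr α
  have hb : 0 < drd ^ α := Real.rpow_pos_of_pos hrd α
  have hc : 0 < dse ^ α := Real.rpow_pos_of_pos hse α
  have hd : 0 < dre ^ α := Real.rpow_pos_of_pos hre α
  have hnum : 0 < dse ^ α * dre ^ α := mul_pos hc hd
  have hD1 : 0 < (dsr ^ α + dse ^ α) * (drd ^ α + dre ^ α) :=
    mul_pos (by linarith) (by linarith)
  have hextra : 0 < dsr ^ α * drd ^ α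
      + (pr / ps) * dsr ^ α * (dsr ^ α + dse ^ α)
      + (ps / pr) * drd ^ α * (drd ^ α + dre ^ α) := by
    have h1 : 0 < (pr / ps) * dsr ^ α * (dsr ^ α + dse ^ α) :=
      mul_pos (mul_pos (div_pos hpr hps) ha) (by linarith)
    have h2 : 0 < (ps / pr) * drd ^ α * (drd ^ α + dre ^ α) :=
      mul_pos (mul_pos (div_pos hps hpr) hb) (by linarith)
    have h3 : 0 < dsr ^ α * drd ^ α := mul_pos ha hb
    linarith
  have hlt : (dsr ^ α + dse ^ α) * (drd ^ α + dre ^ α)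
      < (drd ^ α + dre ^ α) * (dsr ^ α + dse ^ α) + dsr ^ α * drd ^ α
        + (pr / ps) * dsr ^ α * (dsr ^ α + dse ^ α)
        + (ps / pr) * drd ^ α * (drd ^ α + dre ^ α) := by
    nlinarith [hextra]
  have := div_lt_div_of_pos_left hnum hD1 hlt
  linarith
end

section
/- Fix α > 0 and d_sd > 0, place the relay at the midpoint so that d_sr = d_rd = d_sd/2, and let the eavesdropper distances be d_se = d_re = t. Define P_DF(t) = 1 − t^(2α)/( ((d_sd/2)^α + t^α) + (d_sd/2)^α )², i.e. P_DF(t) = 1 − t^(2α)/( √(((d_sd/2)^α + t^α)((d_sd/2)^α + t^α)) + √((d_sd/2)^α·(d_sd/2)^α) )², and P_RF(t) = 1 − t^(2α)/((d_sd/2)^α + t^α)². Then lim_{t→∞} P_RF(t)/P_DF(t) = 1/2. -/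
open Real Filter Topology

/-- With the relay at the midpoint and a far-away equidistant eavesdropper, the RF outage
probability is asymptotically half of the DF outage probability. -/
theorem rf_over_df_limit_half
    (α dsd : ℝ) (hα : 0 < α) (hsd : 0 < dsd)
    (PDF PRF : ℝ → ℝ)
    (hPDF : ∀ t : ℝ, PDF t = 1 - t ^ (2 * α) /
        (Real.sqrt (((dsd / 2) ^ α + t ^ α) * ((dsd / 2) ^ α + t ^ α))
          + Real.sqrt ((dsd / 2) ^ α * (dsd / 2) ^ α)) ^ 2)
    (hPRF : ∀ t : ℝ, PRF t = 1 - t ^ (2 * α) / ((dsd / 2) ^ α + t ^ α) ^ 2) :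
    Tendsto (fun t => PRF t / PDF t) atTop (𝓝 (1 / 2)) := by
  set c : ℝ := (dsd / 2) ^ α with hc
  have hcpos : 0 < c := Real.rpow_pos_of_pos (by positivity) α
  -- the nice form tends to 1/2
  have hmain : Tendsto (fun u : ℝ =>
      ((2*c + c^2/u) * (2*c/u + 1)^2) / ((4*c + 4*c^2/u) * (c/u + 1)^2))
      atTop (𝓝 (1/2)) := by
    have h0 : Tendsto (fun u : ℝ => c / u) atTop (𝓝 0) :=
      tendsto_const_nhds.div_atTop tendsto_id
    have h1 : Tendsto (fun u : ℝ => c^2 / u) atTop (𝓝 0) :=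
      tendsto_const_nhds.div_atTop tendsto_id
    have h2 : Tendsto (fun u : ℝ => 4*c^2 / u) atTop (𝓝 0) :=
      tendsto_const_nhds.div_atTop tendsto_id
    have hnum : Tendsto (fun u : ℝ => (2*c + c^2/u) * (2*c/u + 1)^2) atTop
        (𝓝 ((2*c + 0) * (2*0 + 1)^2)) := by
      apply Tendsto.mul
      · exact tendsto_const_nhds.add h1
      · have := ((h0.const_mul 2).add (tendsto_const_nhds (x := (1:ℝ)))).pow 2
        simpa [mul_div_assoc] using this
    have hden : Tendsto (fun u : ℝ => (4*c + 4*c^2/u) * (c/u + 1)^2) atTop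
        (𝓝 ((4*c + 0) * (0 + 1)^2)) := by
      apply Tendsto.mul
      · have : Tendsto (fun u : ℝ => 4 * (c^2/u)) atTop (𝓝 (4 * 0)) := h1.const_mul 4
        simpa [mul_div_assoc] using tendsto_const_nhds.add this
      · exact (h0.add tendsto_const_nhds).pow 2
    have := hnum.div hden (by positivity)
    have heq : (1:ℝ)/2 = (2*c + 0) * (2*0 + 1)^2 / ((4*c + 0) * (0 + 1)^2) := by
      field_simp
      ring
    rw [heq]
    exact this
  have hf : Tendsto (fun u : ℝ =>
      ((2*c*u + c^2) * (2*c + u)^2) / ((4*c*u + 4*c^2) * (c + u)^2))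
      atTop (𝓝 (1/2)) := by
    apply hmain.congr'
    filter_upwards [eventually_gt_atTop (0:ℝ)] with u hu
    have hu' : u ≠ 0 := ne_of_gt hu
    field_simp
  have hcomp := hf.comp (tendsto_rpow_atTop hα)
  apply hcomp.congr'
  filter_upwards [eventually_gt_atTop (0:ℝ)] with t ht
  have hu : 0 < t ^ α := Real.rpow_pos_of_pos ht α
  set u : ℝ := t ^ α with huu
  have h2a : t ^ (2 * α) = u ^ 2 := by
    rw [mul_comm, Real.rpow_mul ht.le, huu]
    norm_num
  have hs1 : Real.sqrt ((c + u) * (c + u)) = c + u :=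
    Real.sqrt_mul_self (by positivity)
  have hs2 : Real.sqrt (c * c) = c := Real.sqrt_mul_self hcpos.le
  have hPDF' : PDF t = (4*c*u + 4*c^2) / (2*c + u)^2 := by
    rw [hPDF, h2a, hs1, hs2]
    have h2cu : (0:ℝ) < 2*c + u := by positivity
    rw [show c + u + c = 2*c + u by ring]
    field_simp
    ring
  have hPRF' : PRF t = (2*c*u + c^2) / (c + u)^2 := by
    rw [hPRF, h2a]
    have hcu : (0:ℝ) < c + u := by positivity
    field_simp
    ring
  show ((2*c*u + c^2) * (2*c + u)^2) / ((4*c*u + 4*c^2) * (c + u)^2) = PRF t / PDF t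
  rw [hPRF', hPDF']
  have hcu : (0:ℝ) < c + u := by positivity
  have h2cu : (0:ℝ) < 2*c + u := by positivity
  have h4 : (0:ℝ) < 4*c*u + 4*c^2 := by positivity
  field_simp
end

section
/- Fix α > 0 and d_sd > 0, place the relay at the midpoint so that d_sr = d_rd = d_sd/2, and let the eavesdropper distances be d_se = d_re = t. Define P_RF(t) = 1 − t^(2α)/((d_sd/2)^α + t^α)² and P_Direct(t) = d_sd^α/(d_sd^α + t^α). Then lim_{t→∞} P_RF(t)/P_Direct(t) = 1/2^(α−1). -/
open Real Filter Topology

/-- With the relay at the midpoint and a far-away equidistant eavesdropper, the RF outage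
probability is asymptotically `1/2^(α-1)` times the direct-transmission outage probability. -/
theorem rf_over_direct_limit
    (α dsd : ℝ) (hα : 0 < α) (hsd : 0 < dsd)
    (PRF PDirect : ℝ → ℝ)
    (hPRF : ∀ t : ℝ, PRF t = 1 - t ^ (2 * α) / ((dsd / 2) ^ α + t ^ α) ^ 2)
    (hPDirect : ∀ t : ℝ, PDirect t = dsd ^ α / (dsd ^ α + t ^ α)) :
    Tendsto (fun t => PRF t / PDirect t) atTop (𝓝 (1 / 2 ^ (α - 1))) := by
  set c := (dsd / 2) ^ α with hc
  set D := dsd ^ α with hD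
  have hcpos : 0 < c := Real.rpow_pos_of_pos (by linarith) α
  have hDpos : 0 < D := Real.rpow_pos_of_pos hsd α
  set h : ℝ → ℝ := fun v => (c ^ 2 * v + 2 * c) * (D * v + 1) / (D * (c * v + 1) ^ 2) with hh
  have key : ∀ᶠ t in atTop, PRF t / PDirect t = h (t ^ (-α)) := by
    filter_upwards [eventually_gt_atTop (0 : ℝ)] with t ht
    have hu : 0 < t ^ α := Real.rpow_pos_of_pos ht α
    have h2 : t ^ (2 * α) = (t ^ α) ^ 2 := by
      rw [two_mul, Real.rpow_add ht, sq]
    have hneg : t ^ (-α) = (t ^ α)⁻¹ := Real.rpow_neg ht.le α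
    have hcu : c + t ^ α ≠ 0 := by positivity
    have hDu : D + t ^ α ≠ 0 := by positivity
    rw [hPRF, hPDirect, h2, hneg, hh]
    field_simp
    ring
  have hval : h 0 = 1 / 2 ^ (α - 1) := by
    have h1 : h 0 = 2 * c / D := by simp [hh]
    have h2 : c = D / 2 ^ α := by
      rw [hc, hD, Real.div_rpow hsd.le (by norm_num)]
    have h3 : (1 : ℝ) / 2 ^ (α - 1) = 2 / 2 ^ α := by
      rw [Real.rpow_sub (by norm_num : (0:ℝ) < 2), Real.rpow_one]
      field_simp
    have h2α : (0:ℝ) < 2 ^ α := Real.rpow_pos_of_pos (by norm_num) α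
    rw [h1, h2, h3]
    field_simp
  have hcont : ContinuousAt h 0 := by
    apply ContinuousAt.div
    · fun_prop
    · fun_prop
    · simp
      positivity
  have h0 : Tendsto (fun t : ℝ => t ^ (-α)) atTop (𝓝 0) := tendsto_rpow_neg_atTop hα
  have hlim : Tendsto (fun t : ℝ => h (t ^ (-α))) atTop (𝓝 (1 / 2 ^ (α - 1))) := by
    rw [← hval]
    exact hcont.tendsto.comp h0
  exact hlim.congr' (key.mono fun t ht => ht.symm)
end

section
/- Fix α > 0 and d_sd > 0, place the relay at the midpoint so that d_sr = d_rd = d_sd/2, and let the eavesdropper distances be d_se = d_re = t. Define P_DF(t) = 1 − t^(2α)/( (d_sd/2)^α + t^α + (d_sd/2)^α )² (the minimal decode-and-forward outage probability with these distances) and P_Direct(t) = d_sd^α/(d_sd^α + t^α). Then lim_{t→∞} P_DF(t)/P_Direct(t) = 2^(2−α); in particular for α = 2 the limit equals 1, so DF relaying brings no asymptotic benefit over direct transmission at path loss exponent 2. -/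
open Real Filter Topology

/-- With the relay at the midpoint and a far-away equidistant eavesdropper, the minimal DF
outage probability is asymptotically `2^(2-α)` times the direct-transmission outage
probability; in particular for `α = 2` the limit is `1`, i.e. DF relaying brings no
asymptotic benefit over direct transmission. -/
theorem df_over_direct_limit
    (α dsd : ℝ) (hα : 0 < α) (hsd : 0 < dsd)
    (PDF PDirect : ℝ → ℝ)
    (hPDF : ∀ t : ℝ, PDF t = 1 - t ^ (2 * α) /
        ((dsd / 2) ^ α + t ^ α + (dsd / 2) ^ α) ^ 2)
    (hPDirect : ∀ t : ℝ, PDirect t = dsd ^ α / (dsd ^ α + t ^ α)) :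
    Tendsto (fun t => PDF t / PDirect t) atTop (𝓝 ((2 : ℝ) ^ (2 - α)))
    ∧ (α = 2 → Tendsto (fun t => PDF t / PDirect t) atTop (𝓝 1)) := by
  set c : ℝ := (dsd / 2) ^ α with hc_def
  have hc : 0 < c := Real.rpow_pos_of_pos (by linarith) α
  have h2a : (0:ℝ) < (2:ℝ) ^ α := Real.rpow_pos_of_pos two_pos α
  set g : ℝ → ℝ := fun u =>
    ((4*c + 4*c^2 / u) * ((2:ℝ)^α * c / u + 1)) / ((1 + 2*c/u)^2 * ((2:ℝ)^α * c))
    with hg_def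
  have hzero : ∀ k : ℝ, Tendsto (fun u : ℝ => k / u) atTop (𝓝 0) := fun k =>
    Tendsto.div_atTop tendsto_const_nhds tendsto_id
  have hglim : Tendsto g atTop
      (𝓝 (((4*c + 0) * (0 + 1)) / ((1 + 0)^2 * ((2:ℝ)^α * c)))) := by
    apply Tendsto.div
    · exact (tendsto_const_nhds.add (hzero _)).mul ((hzero _).add tendsto_const_nhds)
    · exact ((tendsto_const_nhds.add (hzero _)).pow 2).mul tendsto_const_nhds
    · positivity
  have hval : ((4*c + 0) * (0 + 1)) / ((1 + 0)^2 * ((2:ℝ)^α * c)) = (2:ℝ) ^ (2 - α) := by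
    rw [Real.rpow_sub two_pos]
    have : (2:ℝ) ^ (2:ℝ) = 4 := by
      rw [show (2:ℝ) = ((2:ℕ):ℝ) by norm_num, Real.rpow_natCast]; norm_num
    rw [this]
    field_simp
    ring
  have hmain : Tendsto (fun t => PDF t / PDirect t) atTop (𝓝 ((2 : ℝ) ^ (2 - α))) := by
    have hcomp : Tendsto (fun t : ℝ => g (t ^ α)) atTop (𝓝 ((2 : ℝ) ^ (2 - α))) := by
      have := hglim.comp (tendsto_rpow_atTop hα)
      rwa [hval] at this
    refine hcomp.congr' ?_
    filter_upwards [eventually_gt_atTop (0:ℝ)] with t ht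
    have hu : 0 < t ^ α := Real.rpow_pos_of_pos ht α
    have hsq : t ^ (2*α) = (t ^ α) ^ 2 := by
      rw [show 2*α = α*2 by ring, Real.rpow_mul ht.le, Real.rpow_two]
    have hdsd : dsd ^ α = (2:ℝ)^α * c := by
      rw [hc_def, ← Real.mul_rpow two_pos.le (by linarith : (0:ℝ) ≤ dsd/2)]
      rw [show (2:ℝ)*(dsd/2) = dsd by ring]
    rw [hg_def, hPDF, hPDirect, hsq, hdsd]
    set u := t ^ α
    have h1 : c + u + c ≠ 0 := by positivity
    have h2 : (2:ℝ)^α * c + u ≠ 0 := by positivity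
    field_simp
    ring
  refine ⟨hmain, fun hα2 => ?_⟩
  have : (2:ℝ) ^ (2 - α) = 1 := by rw [hα2]; simp
  rwa [this] at hmain
end

section
/- Let R > 0, 0 < d_sd ≤ R and x = d_sd/R. Then ∫_0^R ( d_sd⁴/(d_sd⁴ + r⁴) )·(2r/R²) dr = x²·arctan(1/x²). -/
open Real

/-- Direct-transmission secrecy outage probability in a circular cell for path loss
exponent `α = 4` (closed form in Proposition 3 of the paper). -/
theorem direct_outage_integral_alpha_four
    (R dsd x : ℝ) (hR : 0 < R) (hsd : 0 < dsd) (hsdR : dsd ≤ R) (hx : x = dsd / R) :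
    ∫ r in (0 : ℝ)..R, dsd ^ 4 / (dsd ^ 4 + r ^ 4) * (2 * r / R ^ 2)
      = x ^ 2 * Real.arctan (1 / x ^ 2) := by
  have hd2 : (dsd:ℝ)^2 ≠ 0 := by positivity
  have hR2 : (R:ℝ)^2 ≠ 0 := by positivity
  have key : ∀ r ∈ Set.uIcc (0:ℝ) R,
      HasDerivAt (fun t => dsd^2/R^2 * Real.arctan (t^2/dsd^2))
        (dsd ^ 4 / (dsd ^ 4 + r ^ 4) * (2 * r / R ^ 2)) r := by
    intro r _
    have h1 : HasDerivAt (fun t : ℝ => t^2/dsd^2) (2*r/dsd^2) r := by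
      simpa using (hasDerivAt_pow 2 r).div_const (dsd^2)
    have h2 := (h1.arctan).const_mul (dsd^2/R^2)
    refine h2.congr_deriv ?_
    have hden : dsd ^ 4 + r ^ 4 ≠ 0 := by positivity
    field_simp
  have hint : IntervalIntegrable
      (fun r => dsd ^ 4 / (dsd ^ 4 + r ^ 4) * (2 * r / R ^ 2))
      MeasureTheory.volume 0 R := by
    apply Continuous.intervalIntegrable
    have : ∀ r : ℝ, dsd ^ 4 + r ^ 4 ≠ 0 := fun r => by positivity
    exact (continuous_const.div (by continuity) this).mul (by continuity)
  rw [intervalIntegral.integral_eq_sub_of_hasDerivAt key hint]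
  subst hx
  have hRne : R ≠ 0 := ne_of_gt hR
  simp only [ne_eq, OfNat.ofNat_ne_zero, not_false_eq_true, zero_pow, zero_div,
    Real.arctan_zero, mul_zero, sub_zero]
  rw [div_pow]
  congr 1
  rw [one_div, ← div_pow]
  congr 1
  field_simp
end

section
/- Let R > 0, 0 < d_sd ≤ R and x = d_sd/R. Then ∫_0^R ( d_sd³/(d_sd³ + r³) )·(2r/R²) dr = 2x²·( (1/6)·ln( (x² − x + 1)/(x + 1)² ) + (1/√3)·( arctan( (2 − x)/(√3·x) ) + π/6 ) ). -/
open Real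

lemma arctan_inv_sqrt_three : Real.arctan (1 / Real.sqrt 3) = π / 6 := by
  rw [← Real.tan_pi_div_six]
  exact Real.arctan_tan (by linarith [Real.pi_pos]) (by linarith [Real.pi_pos])

/-- Direct-transmission secrecy outage probability in a circular cell for path loss
exponent `α = 3` (closed form in Proposition 3 of the paper). -/
theorem direct_outage_integral_alpha_three
    (R dsd x : ℝ) (hR : 0 < R) (hsd : 0 < dsd) (hsdR : dsd ≤ R) (hx : x = dsd / R) :
    ∫ r in (0 : ℝ)..R, dsd ^ 3 / (dsd ^ 3 + r ^ 3) * (2 * r / R ^ 2)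
      = 2 * x ^ 2 * ((1 / 6) * Real.log ((x ^ 2 - x + 1) / (x + 1) ^ 2)
          + (1 / Real.sqrt 3) * (Real.arctan ((2 - x) / (Real.sqrt 3 * x)) + π / 6)) := by
  have hs3 : (0:ℝ) < Real.sqrt 3 := Real.sqrt_pos.mpr (by norm_num)
  have hs3sq : Real.sqrt 3 * Real.sqrt 3 = 3 := Real.mul_self_sqrt (by norm_num)
  set a := dsd
  set F : ℝ → ℝ := fun r =>
    2 * x ^ 2 * ((1 / 6) * (Real.log (r ^ 2 - a * r + a ^ 2) - 2 * Real.log (r + a))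
      + (1 / Real.sqrt 3) * Real.arctan ((2 * r - a) / (Real.sqrt 3 * a))) with hF
  have hQpos : ∀ r : ℝ, 0 < r ^ 2 - a * r + a ^ 2 := by
    intro r
    nlinarith [sq_nonneg (r - a), sq_nonneg r, sq_nonneg a, hsd]
  have hderiv : ∀ r ∈ Set.uIcc (0:ℝ) R,
      HasDerivAt F (a ^ 3 / (a ^ 3 + r ^ 3) * (2 * r / R ^ 2)) r := by
    intro r hr
    rw [Set.uIcc_of_le hR.le] at hr
    have hr0 : 0 ≤ r := hr.1
    have hra : 0 < r + a := by linarith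
    have hQ := hQpos r
    have hcube : 0 < a ^ 3 + r ^ 3 := by positivity
    -- log (r^2 - a r + a^2)
    have h1 : HasDerivAt (fun r : ℝ => Real.log (r ^ 2 - a * r + a ^ 2))
        ((2 * r - a) / (r ^ 2 - a * r + a ^ 2)) r := by
      have hp : HasDerivAt (fun r : ℝ => r ^ 2 - a * r + a ^ 2) (2 * r - a) r := by
        have := (((hasDerivAt_pow 2 r).sub ((hasDerivAt_id r).const_mul a)).add_const (a ^ 2))
        exact this.congr_deriv (by push_cast; ring)
      simpa [div_eq_mul_inv, mul_comm] using hp.log hQ.ne'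
    -- log (r + a)
    have h2 : HasDerivAt (fun r : ℝ => Real.log (r + a)) (1 / (r + a)) r := by
      simpa [one_div] using ((hasDerivAt_id r).add_const a).log hra.ne'
    -- arctan, with the √3 already eliminated from the derivative
    have hden : 1 + ((2 * r - a) / (Real.sqrt 3 * a)) ^ 2
        = 4 * (r ^ 2 - a * r + a ^ 2) / (3 * a ^ 2) := by
      rw [div_pow, mul_pow, Real.sq_sqrt (by norm_num : (0:ℝ) ≤ 3)]
      field_simp
      ring
    have h3 : HasDerivAt
        (fun r : ℝ => (1 / Real.sqrt 3) * Real.arctan ((2 * r - a) / (Real.sqrt 3 * a)))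
        (a / (2 * (r ^ 2 - a * r + a ^ 2))) r := by
      have hu : HasDerivAt (fun r : ℝ => (2 * r - a) / (Real.sqrt 3 * a))
          (2 / (Real.sqrt 3 * a)) r := by
        have := (((hasDerivAt_id r).const_mul 2).sub_const a).div_const (Real.sqrt 3 * a)
        simpa [mul_comm] using this
      have h := (hu.arctan).const_mul (1 / Real.sqrt 3)
      refine h.congr_deriv ?_
      rw [hden]
      field_simp
      ring_nf
      rw [Real.sq_sqrt (by norm_num : (0:ℝ) ≤ 3)]
      ring
    have hcomb := (((h1.sub (h2.const_mul 2)).const_mul ((1:ℝ)/6)).add h3).const_mul (2 * x ^ 2)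
    refine hcomb.congr_deriv ?_
    have hfac : a ^ 3 + r ^ 3 = (r + a) * (r ^ 2 - a * r + a ^ 2) := by ring
    rw [hfac, hx]
    field_simp [hQ.ne', hra.ne', (show 0 < r * (r - a) + a ^ 2 by linarith).ne']
    ring
  have hcont : IntervalIntegrable
      (fun r : ℝ => a ^ 3 / (a ^ 3 + r ^ 3) * (2 * r / R ^ 2)) MeasureTheory.volume 0 R := by
    apply ContinuousOn.intervalIntegrable
    apply ContinuousOn.mul
    · apply ContinuousOn.div continuousOn_const (by fun_prop)
      intro r hr
      rw [Set.uIcc_of_le hR.le] at hr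
      have h1 : (0:ℝ) < a ^ 3 := pow_pos hsd 3
      have h2 : (0:ℝ) ≤ r ^ 3 := pow_nonneg hr.1 3
      linarith
    · fun_prop
  have hkey := intervalIntegral.integral_eq_sub_of_hasDerivAt hderiv hcont
  have hxpos : 0 < x := hx ▸ div_pos hsd hR
  -- endpoint values
  have hF0 : F 0 = 2 * x ^ 2 * ((1 / Real.sqrt 3) * (-(π / 6))) := by
    have e0 : Real.log ((0:ℝ) ^ 2 - a * 0 + a ^ 2) - 2 * Real.log (0 + a) = 0 := by
      norm_num [Real.log_pow]
    have e0' : ((2:ℝ) * 0 - a) / (Real.sqrt 3 * a) = -(1 / Real.sqrt 3) := by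
      field_simp <;> ring
    rw [hF]
    simp only []
    rw [e0, e0', Real.arctan_neg, _root_.arctan_inv_sqrt_three]
    ring
  have hFR : F R = 2 * x ^ 2 * ((1 / 6) * Real.log ((x ^ 2 - x + 1) / (x + 1) ^ 2)
      + (1 / Real.sqrt 3) * Real.arctan ((2 - x) / (Real.sqrt 3 * x))) := by
    have hRa : (0:ℝ) < R + a := by linarith
    have harg : (x ^ 2 - x + 1) / (x + 1) ^ 2
        = (R ^ 2 - a * R + a ^ 2) / (R + a) ^ 2 := by
      rw [hx]; field_simp; ring
    have eRlog : Real.log (R ^ 2 - a * R + a ^ 2) - 2 * Real.log (R + a)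
        = Real.log ((x ^ 2 - x + 1) / (x + 1) ^ 2) := by
      rw [harg, Real.log_div (hQpos R).ne' (by positivity), Real.log_pow]
      push_cast; ring
    have eRarctan : (2 * R - a) / (Real.sqrt 3 * a) = (2 - x) / (Real.sqrt 3 * x) := by
      rw [hx]; field_simp <;> ring
    rw [hF]
    simp only []
    rw [eRlog, eRarctan]
  rw [hkey, hFR, hF0]
  ring
end
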